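/- arXiv:2401.11587 — 7 statements merged into one kernel-verified Lean document; each statement's English description precedes it below -/
import Mathlib

section
/- Let ℓ ≥ 4 and s ≥ 0 be integers and let G be a B(ℓ,s)-free graph. Then no vertex of G of degree at least ℓ+s is an endpoint of a path on ℓ−1 vertices in G. -/
open scoped Classical
open Finset SimpleGraph

/-- The broom `B(ℓ,s)`: a path on vertices `0,…,ℓ-1` plus `s` extra leaves
`ℓ,…,ℓ+s-1` attached to the penultimate vertex `ℓ-2` of the path. -/
def broom (ℓ s : ℕ) : SimpleGraph (Fin (ℓ + s)) :=
  SimpleGraph.fromRel (fun a b => (a.val + 1 = b.val ∧ b.val < ℓ) ∨ (a.val = ℓ - 2 ∧ ℓ ≤ b.val))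

/-- `G` contains no subgraph isomorphic to the broom `B(ℓ,s)`. -/
def BroomFree (ℓ s : ℕ) {V : Type*} (G : SimpleGraph V) : Prop :=
  ¬ ∃ f : broom ℓ s →g G, Function.Injective f

lemma aux_getVert_mem_support {V : Type*} {G : SimpleGraph V} {u v : V}
    (p : G.Walk u v) (i : ℕ) : p.getVert i ∈ p.support := by
  induction p generalizing i with
  | nil => cases i <;> simp [SimpleGraph.Walk.getVert]
  | cons h q ih =>
    cases i with
    | zero => simp [SimpleGraph.Walk.getVert]
    | succ n => simp [SimpleGraph.Walk.getVert, ih n]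

lemma aux_getVert_inj {V : Type*} {G : SimpleGraph V} {u v : V}
    {p : G.Walk u v} (hp : p.IsPath) {i j : ℕ} (hi : i ≤ p.length) (hj : j ≤ p.length)
    (h : p.getVert i = p.getVert j) : i = j := by
  induction p generalizing i j with
  | nil => simp only [SimpleGraph.Walk.length_nil] at hi hj; omega
  | cons hadj q ih =>
    rw [SimpleGraph.Walk.cons_isPath_iff] at hp
    cases i with
    | zero =>
      cases j with
      | zero => rfl
      | succ m =>
        exfalso
        rw [SimpleGraph.Walk.getVert_cons_succ, SimpleGraph.Walk.getVert_zero] at h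
        exact hp.2 (by rw [h]; exact aux_getVert_mem_support q m)
    | succ n =>
      cases j with
      | zero =>
        exfalso
        rw [SimpleGraph.Walk.getVert_cons_succ, SimpleGraph.Walk.getVert_zero] at h
        exact hp.2 (by rw [← h]; exact aux_getVert_mem_support q n)
      | succ m =>
        have := ih hp.1 (by simpa using hi) (by simpa using hj) h
        omega

/-- In a `B(ℓ,s)`-free graph, no vertex of degree at least `ℓ+s` is an endpoint of a
path on `ℓ-1` vertices (i.e. a path of length `ℓ-2`). -/
theorem broomFree_no_high_degree_path_endpoint {V : Type*} [Fintype V] (ℓ s : ℕ)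
    (hℓ : 4 ≤ ℓ) (G : SimpleGraph V) (hG : BroomFree ℓ s G)
    (u v : V) (p : G.Walk u v) (hp : p.IsPath) (hlen : p.length = ℓ - 2) :
    G.degree u < ℓ + s := by
  by_contra hcon
  push_neg at hcon
  apply hG
  -- the set of neighbors of `u` off the path
  set N : Finset V := G.neighborFinset u \ p.support.toFinset with hN
  have hsupp_card : p.support.toFinset.card ≤ ℓ - 1 := by
    calc p.support.toFinset.card ≤ p.support.length := p.support.toFinset_card_le
    _ = p.length + 1 := p.length_support
    _ ≤ ℓ - 1 := by omega
  have hNcard : s + 1 ≤ N.card := by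
    have h1 : (G.neighborFinset u).card = G.degree u := G.card_neighborFinset_eq_degree u
    have h2 : (G.neighborFinset u).card - p.support.toFinset.card ≤ N.card := by
      rw [hN]; exact Finset.le_card_sdiff _ _
    omega
  obtain ⟨T, hTN, hTcard⟩ := Finset.exists_subset_card_eq hNcard
  have hT : ∀ x ∈ T, G.Adj u x ∧ x ∉ p.support := by
    intro x hx
    have := hTN hx
    rw [hN, Finset.mem_sdiff, SimpleGraph.mem_neighborFinset, List.mem_toFinset] at this
    exact this
  let e : Fin (s + 1) ≃ T := (T.equivFinOfCardEq hTcard).symm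
  -- the embedding of the broom
  let g : Fin (ℓ + s) → V := fun a =>
    if h : a.val < ℓ - 1 then p.getVert (ℓ - 2 - a.val)
    else (e ⟨a.val - (ℓ - 1), by omega⟩ : V)
  have hgpath : ∀ a : Fin (ℓ + s), a.val < ℓ - 1 → g a = p.getVert (ℓ - 2 - a.val) := by
    intro a ha; simp only [g, dif_pos ha]
  have hgext : ∀ (a : Fin (ℓ + s)) (ha : ¬ a.val < ℓ - 1),
      g a = (e ⟨a.val - (ℓ - 1), by omega⟩ : V) := by
    intro a ha; simp only [g, dif_neg ha]
  -- the base relation maps to adjacency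
  have key : ∀ a b : Fin (ℓ + s),
      ((a.val + 1 = b.val ∧ b.val < ℓ) ∨ (a.val = ℓ - 2 ∧ ℓ ≤ b.val)) → G.Adj (g a) (g b) := by
    intro a b hab
    rcases hab with ⟨hab, hbℓ⟩ | ⟨haℓ, hbℓ⟩
    · have ha : a.val < ℓ - 1 := by omega
      rw [hgpath a ha]
      by_cases hb : b.val < ℓ - 1
      · rw [hgpath b hb]
        have hstep : ℓ - 2 - a.val = (ℓ - 2 - b.val) + 1 := by omega
        have hlt : ℓ - 2 - b.val < p.length := by omega
        rw [hstep]
        exact (p.adj_getVert_succ hlt).symm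
      · -- b = ℓ - 1, so a = ℓ - 2 and g a = u
        have hb' : b.val = ℓ - 1 := by omega
        have ha' : ℓ - 2 - a.val = 0 := by omega
        rw [ha', p.getVert_zero, hgext b hb]
        exact (hT _ (e ⟨b.val - (ℓ - 1), by omega⟩).2).1
    · have ha : a.val < ℓ - 1 := by omega
      have hb : ¬ b.val < ℓ - 1 := by omega
      have ha' : ℓ - 2 - a.val = 0 := by omega
      rw [hgpath a ha, ha', p.getVert_zero, hgext b hb]
      exact (hT _ (e ⟨b.val - (ℓ - 1), by omega⟩).2).1
  refine ⟨⟨g, ?_⟩, ?_⟩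
  · intro a b hab
    rw [broom, SimpleGraph.fromRel_adj] at hab
    rcases hab.2 with h | h
    · exact key a b h
    · exact (key b a h).symm
  · intro a b hab
    replace hab : g a = g b := hab
    by_cases ha : a.val < ℓ - 1 <;> by_cases hb : b.val < ℓ - 1
    · rw [hgpath a ha, hgpath b hb] at hab
      have := aux_getVert_inj hp (i := ℓ - 2 - a.val) (j := ℓ - 2 - b.val)
        (by omega) (by omega) hab
      exact Fin.ext (by omega)
    · exfalso
      rw [hgpath a ha, hgext b hb] at hab
      exact (hT _ (e ⟨b.val - (ℓ - 1), by omega⟩).2).2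
        (hab ▸ aux_getVert_mem_support p _)
    · exfalso
      rw [hgext a ha, hgpath b hb] at hab
      exact (hT _ (e ⟨a.val - (ℓ - 1), by omega⟩).2).2
        (hab.symm ▸ aux_getVert_mem_support p _)
    · rw [hgext a ha, hgext b hb] at hab
      have h1 := e.injective (Subtype.ext hab)
      have h2 : a.val - (ℓ - 1) = b.val - (ℓ - 1) := congrArg Fin.val h1
      exact Fin.ext (by omega)
end

section
/- Let ℓ ≥ 4 be an even integer, s ≥ 0, k = (ℓ−2)/2, and n > ℓ+s. Then the graph H(k,n) contains no subgraph isomorphic to the broom B(ℓ,s). -/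
open scoped Classical
open Finset SimpleGraph

/-- `H(k,n)`: the complete bipartite graph `K_{k,n-k}` with all edges added inside
the part `{0,…,k-1}` of size `k`. -/
noncomputable def Hgraph (k n : ℕ) : SimpleGraph (Fin n) :=
  SimpleGraph.fromRel (fun a b => a.val < k ∨ b.val < k)

/-- For even `ℓ ≥ 4`, `k = (ℓ-2)/2` and `n > ℓ+s`, the graph `H(k,n)` is
`B(ℓ,s)`-free. -/
theorem Hgraph_broomFree_even (ℓ s k n : ℕ) (hℓ : 4 ≤ ℓ) (heven : Even ℓ)
    (hk : k = (ℓ - 2) / 2) (hn : ℓ + s < n) :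
    BroomFree ℓ s (Hgraph k n) := by
  rintro ⟨f, hf⟩
  obtain ⟨m, hm⟩ := heven
  have hm2 : 2 ≤ m := by omega
  have hlt : ∀ j : ℕ, j < m → 2 * j + 1 < ℓ + s := by omega
  have hlt' : ∀ j : ℕ, j < m → 2 * j < ℓ + s := by omega
  have key : ∀ j (hj : j < m),
      (f ⟨2 * j, hlt' j hj⟩).val < k ∨ (f ⟨2 * j + 1, hlt j hj⟩).val < k := by
    intro j hj
    have hadj : (broom ℓ s).Adj ⟨2 * j, hlt' j hj⟩ ⟨2 * j + 1, hlt j hj⟩ := by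
      rw [broom, SimpleGraph.fromRel_adj]
      refine ⟨?_, Or.inl (Or.inl ⟨rfl, show 2 * j + 1 < ℓ by omega⟩)⟩
      intro h
      have := congrArg Fin.val h
      simp at this
    have := f.map_adj hadj
    unfold Hgraph at this
    rw [SimpleGraph.fromRel_adj] at this
    tauto
  set g : Fin m → Fin k := fun j =>
    if h : (f ⟨2 * j.val, hlt' j.val j.isLt⟩).val < k then
      ⟨(f ⟨2 * j.val, hlt' j.val j.isLt⟩).val, h⟩
    else
      ⟨(f ⟨2 * j.val + 1, hlt j.val j.isLt⟩).val, (key j.val j.isLt).resolve_left h⟩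
    with hg
  have hginj : Function.Injective g := by
    intro j j' h
    have hval := congrArg Fin.val h
    rw [hg] at hval
    simp only at hval
    split_ifs at hval with h1 h2 h2 <;>
    · have := hf (Fin.val_injective hval)
      have := congrArg Fin.val this
      simp only at this
      exact Fin.val_injective (by omega)
  have hcard := Fintype.card_le_of_injective g hginj
  simp only [Fintype.card_fin] at hcard
  omega
end

section
/- Let ℓ ≥ 7 be an odd integer, s ≥ 0, k = (ℓ−3)/2, and n sufficiently large (e.g. n > 2(ℓ+s)). Then the graph H*(k,n), obtained from H(k,n) by adding one edge inside the part of size n−k, contains no subgraph isomorphic to the broom B(ℓ,s). -/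
open scoped Classical
open Finset SimpleGraph

/-- `H*(k,n)`: `H(k,n)` together with one extra edge (between `k` and `k+1`) inside
the part of size `n-k`. -/
noncomputable def HstarGraph (k n : ℕ) : SimpleGraph (Fin n) :=
  SimpleGraph.fromRel (fun a b => a.val < k ∨ b.val < k ∨ (a.val = k ∧ b.val = k + 1))

/-!
The path `P_ℓ` inside `B(ℓ,s)` already fails to embed. It has `ℓ - 1 = 2k + 2` edges. In `H*(k,n)`
every edge except `{k, k+1}` meets the `k`-set `{0,…,k-1}`, and an embedded path passes through
each vertex at most once, so at most two of its edges meet each vertex of that set. Hence an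
embedded `P_ℓ` has at most `2k + 1` edges.
-/

namespace SimpleGraph

variable {V W : Type*} [Fintype W] {G : SimpleGraph V} {H : SimpleGraph W} [DecidableRel H.Adj]

theorem Copy.card_edgeFinset_le_of_degree_le (f : Copy H G) {d : ℕ} (hd : ∀ w, H.degree w ≤ d)
    (A : Finset V) (E : Finset (Sym2 V)) (hE : ∀ e ∈ G.edgeSet, (∀ v ∈ e, v ∉ A) → e ∈ E) :
    #H.edgeFinset ≤ d * #A + #E := by
  set B : Finset W := {w | f w ∈ A}
  have hB : #B ≤ #A :=
    card_le_card_of_injOn f (fun w hw => by simpa [B] using hw) f.injective.injOn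
  have hcover : H.edgeFinset ⊆
      B.biUnion (fun w => H.incidenceFinset w) ∪ {e ∈ H.edgeFinset | ∀ w ∈ e, f w ∉ A} := by
    intro e he
    by_cases h : ∃ w ∈ e, f w ∈ A
    · obtain ⟨w, hwe, hwA⟩ := h
      exact mem_union_left _ (mem_biUnion.2 ⟨w, by simpa [B] using hwA,
        (H.mem_incidenceFinset w e).2 ⟨mem_edgeFinset.1 he, hwe⟩⟩)
    · exact mem_union_right _ (mem_filter.2 ⟨he, fun w hw hwA => h ⟨w, hw, hwA⟩⟩)
  have hmeet : #(B.biUnion (fun w => H.incidenceFinset w)) ≤ d * #A := calc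
    #(B.biUnion (fun w => H.incidenceFinset w)) ≤ ∑ w ∈ B, #(H.incidenceFinset w) := card_biUnion_le
    _ = ∑ w ∈ B, H.degree w := by simp only [card_incidenceFinset_eq_degree]
    _ ≤ #B * d := sum_le_card_nsmul _ _ _ fun w _ => hd w
    _ ≤ d * #A := by rw [mul_comm]; exact Nat.mul_le_mul_left d hB
  have havoid : #{e ∈ H.edgeFinset | ∀ w ∈ e, f w ∉ A} ≤ #E := by
    refine card_le_card_of_injOn (Sym2.map f) (fun e he => hE _ ?_ ?_)
      (Sym2.map.injective f.injective).injOn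
    · exact f.toHom.map_mem_edgeSet (mem_edgeFinset.1 (mem_filter.1 he).1)
    · intro v hv
      obtain ⟨w, hw, rfl⟩ := Sym2.mem_map.1 hv
      exact (mem_filter.1 he).2 w hw
  calc #H.edgeFinset ≤ _ := card_le_card hcover
    _ ≤ _ := card_union_le _ _
    _ ≤ _ := add_le_add hmeet havoid

theorem pathGraph_degree_le_two {m : ℕ} (v : Fin m) : (pathGraph m).degree v ≤ 2 := calc
  (pathGraph m).degree v ≤ #({v.val - 1, v.val + 1} : Finset ℕ) := by
    refine card_le_card_of_injOn Fin.val (fun w hw => ?_) Fin.val_injective.injOn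
    have hvw : v.val + 1 = w.val ∨ w.val + 1 = v.val := by simpa [pathGraph_adj] using hw
    simp only [coe_insert, coe_singleton, Set.mem_insert_iff, Set.mem_singleton_iff]
    omega
  _ ≤ 2 := card_le_two

theorem card_edgeFinset_pathGraph (m : ℕ) : #(pathGraph (m + 1)).edgeFinset = m := by
  have hedges : (pathGraph (m + 1)).edgeFinset =
      univ.image fun i : Fin m => s(i.castSucc, i.succ) := by
    ext e
    induction e using Sym2.ind with
    | _ u v =>
      simp only [mem_edgeFinset, mem_edgeSet, pathGraph_adj, mem_image, mem_univ, true_and,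
        Sym2.eq_iff, Fin.ext_iff, Fin.val_castSucc, Fin.val_succ]
      constructor
      · rintro (h | h)
        · exact ⟨⟨u, by omega⟩, by dsimp only; omega⟩
        · exact ⟨⟨v, by omega⟩, by dsimp only; omega⟩
      · rintro ⟨i, h⟩
        omega
  rw [hedges, card_image_of_injective, card_univ, Fintype.card_fin]
  intro i j hij
  simp only [Sym2.eq_iff, Fin.ext_iff, Fin.val_castSucc, Fin.val_succ] at hij
  omega

end SimpleGraph

theorem pathGraph_isContained_broom (ℓ s : ℕ) : pathGraph ℓ ⊑ broom ℓ s := by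
  have hle : ℓ ≤ ℓ + s := Nat.le_add_right ℓ s
  refine ⟨⟨⟨Fin.castLE hle, fun {u v} huv => ?_⟩, Fin.castLE_injective hle⟩⟩
  rw [pathGraph_adj] at huv
  simp only [broom, fromRel_adj, ne_eq, Fin.ext_iff, Fin.val_castLE]
  omega

theorem HstarGraph_adj_of_le_of_le {k n : ℕ} {u v : Fin n} (huv : (HstarGraph k n).Adj u v)
    (hu : k ≤ u.val) (hv : k ≤ v.val) :
    u.val = k ∧ v.val = k + 1 ∨ u.val = k + 1 ∧ v.val = k := by
  rw [HstarGraph, fromRel_adj] at huv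
  omega

theorem card_HstarGraph_edges_avoiding_le_one (k n : ℕ) :
    #{e ∈ (HstarGraph k n).edgeFinset | ∀ v ∈ e, v ∉ ({v | v.val < k} : Finset (Fin n))} ≤ 1 := by
  refine card_le_one.2 fun e he e' he' => ?_
  induction e using Sym2.ind with | _ a b =>
  induction e' using Sym2.ind with | _ c d =>
  simp only [mem_filter, mem_edgeFinset, mem_edgeSet, Sym2.mem_iff,
    mem_univ, true_and, not_lt, forall_eq_or_imp, forall_eq] at he he'
  have hab := HstarGraph_adj_of_le_of_le he.1 he.2.1 he.2.2
  have hcd := HstarGraph_adj_of_le_of_le he'.1 he'.2.1 he'.2.2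
  simp only [Sym2.eq_iff, Fin.ext_iff]
  omega

theorem HstarGraph_broomFree_odd_general (ℓ s k n : ℕ) (hℓ : 7 ≤ ℓ) (hodd : Odd ℓ)
    (hk : k = (ℓ - 3) / 2) :
    BroomFree ℓ s (HstarGraph k n) := by
  rintro ⟨f, hf⟩
  have hℓk : ℓ = 2 * k + 2 + 1 := by
    obtain ⟨m, rfl⟩ := hodd
    omega
  subst hℓk
  obtain ⟨path⟩ := pathGraph_isContained_broom _ s
  have hcount := (Copy.comp ⟨f, hf⟩ path).card_edgeFinset_le_of_degree_le
    pathGraph_degree_le_two {v | v.val < k} _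
    fun e he hout => mem_filter.2 ⟨mem_edgeFinset.2 he, hout⟩
  rw [card_edgeFinset_pathGraph] at hcount
  have hclique : #{v : Fin n | v.val < k} = min n k := Fin.card_filter_val_lt
  have hextra := card_HstarGraph_edges_avoiding_le_one k n
  omega

/-- For odd `ℓ ≥ 7`, `k = (ℓ-3)/2` and `n > 2(ℓ+s)`, the graph `H*(k,n)` is
`B(ℓ,s)`-free. -/
theorem HstarGraph_broomFree_odd (ℓ s k n : ℕ) (hℓ : 7 ≤ ℓ) (hodd : Odd ℓ)
    (hk : k = (ℓ - 3) / 2) (hn : 2 * (ℓ + s) < n) :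
    BroomFree ℓ s (HstarGraph k n) :=
  HstarGraph_broomFree_odd_general ℓ s k n hℓ hodd hk
end

section
/- For every s ≥ 1 and every n ≥ 2, the graph F_n, obtained from the star S_n on n vertices by adding ⌊(n−1)/2⌋ independent edges between its leaves, contains no subgraph isomorphic to the broom B(5,s). -/
open scoped Classical
open Finset SimpleGraph

/-- `F_n`: the star on `n` vertices with center `0`, together with the matching
`{1,2}, {3,4}, …` of size `⌊(n-1)/2⌋` among the leaves. -/
noncomputable def Fgraph (n : ℕ) : SimpleGraph (Fin n) :=
  SimpleGraph.fromRel (fun a b => a.val = 0 ∨ (a.val % 2 = 1 ∧ b.val = a.val + 1))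

/-- Adjacency between two nonzero vertices of `F_n` means they are matched. -/
lemma fadj {n : ℕ} {x y : Fin n} (h : (Fgraph n).Adj x y)
    (hx : x.val ≠ 0) (hy : y.val ≠ 0) :
    (x.val % 2 = 1 ∧ y.val = x.val + 1) ∨ (y.val % 2 = 1 ∧ x.val = y.val + 1) := by
  simp only [Fgraph, SimpleGraph.fromRel_adj] at h
  tauto

/-- A nonzero vertex of `F_n` has at most one nonzero neighbor. -/
lemma fkey {n : ℕ} {x a b : Fin n} (ha : (Fgraph n).Adj x a) (hb : (Fgraph n).Adj x b)
    (hx : x.val ≠ 0) (ha0 : a.val ≠ 0) (hb0 : b.val ≠ 0) : a = b := by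
  have h1 := fadj ha hx ha0
  have h2 := fadj hb hx hb0
  apply Fin.ext
  omega

/-- For `s ≥ 1` and `n ≥ 2`, the graph `F_n` is `B(5,s)`-free. -/
theorem Fgraph_broomFree (s n : ℕ) (hs : 1 ≤ s) (hn : 2 ≤ n) :
    BroomFree 5 s (Fgraph n) := by
  rintro ⟨f, hf⟩
  have hsp : ∀ i : ℕ, i ≤ 5 → i < 5 + s := fun i h => by omega
  let V : ℕ → Fin (5 + s) := fun i => if h : i < 5 + s then ⟨i, h⟩ else ⟨0, by omega⟩
  have hV : ∀ i, i ≤ 5 → (V i).val = i := fun i h => by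
    simp [V, hsp i h]
  have hVne : ∀ i j, i ≤ 5 → j ≤ 5 → i ≠ j → V i ≠ V j := fun i j hi hj hij h => by
    apply hij
    rw [← hV i hi, ← hV j hj, h]
  have hAdj : ∀ i j, i ≤ 5 → j ≤ 5 → (i + 1 = j ∧ j < 5) ∨ (i = 3 ∧ 5 ≤ j) →
      (broom 5 s).Adj (V i) (V j) := by
    intro i j hi hj h
    have hij : i ≠ j := by omega
    simp only [broom, SimpleGraph.fromRel_adj]
    refine ⟨hVne i j hi hj hij, Or.inl ?_⟩
    rw [hV i hi, hV j hj]
    exact h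
  have a01 := f.map_adj (hAdj 0 1 (by omega) (by omega) (by omega))
  have a12 := f.map_adj (hAdj 1 2 (by omega) (by omega) (by omega))
  have a23 := f.map_adj (hAdj 2 3 (by omega) (by omega) (by omega))
  have a34 := f.map_adj (hAdj 3 4 (by omega) (by omega) (by omega))
  have a35 := f.map_adj (hAdj 3 5 (by omega) (by omega) (by omega))
  have ne : ∀ i j, i ≤ 5 → j ≤ 5 → i ≠ j → f (V i) ≠ f (V j) :=
    fun i j hi hj hij h => hVne i j hi hj hij (hf h)
  by_cases h3 : (f (V 3)).val = 0
  · have h1 : (f (V 1)).val ≠ 0 := fun h =>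
      ne 1 3 (by omega) (by omega) (by omega) (Fin.ext (h.trans h3.symm))
    have h0 : (f (V 0)).val ≠ 0 := fun h =>
      ne 0 3 (by omega) (by omega) (by omega) (Fin.ext (h.trans h3.symm))
    have h2 : (f (V 2)).val ≠ 0 := fun h =>
      ne 2 3 (by omega) (by omega) (by omega) (Fin.ext (h.trans h3.symm))
    exact ne 0 2 (by omega) (by omega) (by omega) (fkey a01.symm a12 h1 h0 h2)
  · by_cases h2 : (f (V 2)).val = 0
    · have h4 : (f (V 4)).val ≠ 0 := fun h =>
        ne 2 4 (by omega) (by omega) (by omega) (Fin.ext (h2.trans h.symm))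
      have h5' : (f (V 5)).val ≠ 0 := fun h =>
        ne 2 5 (by omega) (by omega) (by omega) (Fin.ext (h2.trans h.symm))
      exact ne 4 5 (by omega) (by omega) (by omega) (fkey a34 a35 h3 h4 h5')
    · by_cases h4 : (f (V 4)).val = 0
      · have h5' : (f (V 5)).val ≠ 0 := fun h =>
          ne 4 5 (by omega) (by omega) (by omega) (Fin.ext (h4.trans h.symm))
        exact ne 2 5 (by omega) (by omega) (by omega) (fkey a23.symm a35 h3 h2 h5')
      · exact ne 2 4 (by omega) (by omega) (by omega) (fkey a23.symm a34 h3 h2 h4)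
end

section
/- Let ℓ ≥ 4, s ≥ 0, k = ⌊(ℓ−2)/2⌋, and let G be a B(ℓ,s)-free graph. Suppose H is an r-uniform hypergraph on the vertex set of G such that every hyperedge of H is an r-set of vertices having more than ℓ+s common neighbors in G, where 2k+2 ≤ ℓ+s. Then H contains no Berge path with k+1 hyperedges. -/
open scoped Classical
open Finset SimpleGraph

/-- A Berge path with `t` hyperedges: distinct hyperedges `h 0, …, h (t-1)` and distinct
vertices `v 0, …, v t` with `v i, v (i+1) ∈ h i`. -/
def HasBergePath {V : Type*} (H : Finset (Finset V)) (t : ℕ) : Prop :=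
  ∃ (h : Fin t → Finset V) (v : Fin (t + 1) → V),
    Function.Injective h ∧ Function.Injective v ∧
    (∀ i, h i ∈ H) ∧ ∀ i : Fin t, v i.castSucc ∈ h i ∧ v i.succ ∈ h i

/-!
Choose distinct common neighbours `u i` of the hyperedges `h i` of the Berge path, avoiding
its core vertices `v j`: Hall's condition holds because each hyperedge has more than
`ℓ + s ≥ 2k + 2` common neighbours. Then `v 0, u 0, v 1, …, u k, v (k+1)` is a path in `G` on
`2k + 3 ≥ ℓ` vertices. Its last `ℓ - 1` vertices form a path ending at `v (k+1) ∈ h k`, and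
`v (k+1)` is adjacent to the more than `ℓ + s` common neighbours of `h k`. Taking `s + 1` of
them off the path completes a copy of `B(ℓ, s)`.
-/

open Function

section

variable {V : Type*}

theorem exists_injective_forall_mem_sdiff [DecidableEq V] {ι : Type*} [Fintype ι]
    (N : ι → Finset V) (A : Finset V)
    (hN : ∀ i, #A + Fintype.card ι ≤ #(N i)) :
    ∃ u : ι → V, Injective u ∧ ∀ i, u i ∈ N i \ A := by
  refine (all_card_le_biUnion_card_iff_exists_injective fun i => N i \ A).1 fun s => ?_
  rcases s.eq_empty_or_nonempty with rfl | ⟨i, hi⟩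
  · simp
  calc #s ≤ Fintype.card ι := card_le_univ s
    _ ≤ #(N i \ A) := by have := le_card_sdiff A (N i); have := hN i; omega
    _ ≤ #(s.biUnion fun i => N i \ A) :=
      card_le_card (subset_biUnion_of_mem (fun i => N i \ A) hi)

theorem exists_isPath_alternating (G : SimpleGraph V) :
    ∀ {t : ℕ} (v : Fin (t + 1) → V) (u : Fin t → V), Injective v → Injective u →
      (∀ i j, u i ≠ v j) → (∀ i, G.Adj (v i.castSucc) (u i) ∧ G.Adj (u i) (v i.succ)) →
      ∃ (a : V) (p : G.Walk a (v (Fin.last t))), p.IsPath ∧ p.length = 2 * t ∧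
        ∀ w ∈ p.support, w ∈ Set.range v ∨ w ∈ Set.range u
  | 0, v, _, _, _, _, _ => ⟨_, .nil, .nil, rfl, by simp⟩
  | t + 1, v, u, hv, hu, huv, hadj => by
    obtain ⟨a, p, hp, hlen, hsupp⟩ := exists_isPath_alternating G (v ∘ Fin.castSucc)
      (u ∘ Fin.castSucc) (hv.comp (Fin.castSucc_injective _)) (hu.comp (Fin.castSucc_injective _))
      (fun i j => huv _ _) (fun i => hadj i.castSucc)
    have hu_notMem : u (Fin.last t) ∉ p.support := fun hw => by
      rcases hsupp _ hw with ⟨i, hi⟩ | ⟨i, hi⟩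
      · exact huv _ _ hi.symm
      · exact Fin.castSucc_ne_last i (hu hi)
    have hv_notMem : v (Fin.last (t + 1)) ∉ (p.concat (hadj (Fin.last t)).1).support := by
      rw [Walk.support_concat, List.mem_append, List.mem_singleton, not_or]
      refine ⟨fun hw => ?_, huv _ _ ∘ Eq.symm⟩
      rcases hsupp _ hw with ⟨i, hi⟩ | ⟨i, hi⟩
      · exact Fin.castSucc_ne_last _ (hv hi)
      · exact huv _ _ hi
    refine ⟨a, (p.concat (hadj _).1).concat (hadj _).2,
      (hp.concat hu_notMem _).concat hv_notMem _, by rw [Walk.length_concat, Walk.length_concat, hlen]; ring, fun w hw => ?_⟩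
    simp only [Walk.support_concat, List.mem_append, List.mem_singleton] at hw
    rcases hw with (hw | rfl) | rfl
    · rcases hsupp w hw with ⟨i, rfl⟩ | ⟨i, rfl⟩
      exacts [.inl ⟨_, rfl⟩, .inr ⟨_, rfl⟩]
    · exact .inr ⟨_, rfl⟩
    · exact .inl ⟨_, rfl⟩

theorem not_broomFree_of_isPath {s : ℕ} {G : SimpleGraph V} {a x : V} {p : G.Walk a x}
    (hp : p.IsPath) (y : Fin (s + 1) → V) (hy : Injective y) (hxy : ∀ i, G.Adj x (y i))
    (hyp : ∀ i, y i ∉ p.support) : ¬ BroomFree (p.length + 2) s G := by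
  set m := p.length
  -- `y 0` is the last vertex of the broom's path, `y 1, …, y s` are its leaves.
  let f : Fin (m + 2 + s) → V := fun i =>
    if i.val ≤ m then p.getVert i else y ⟨i - (m + 1), by omega⟩
  have hf_path {i : Fin (m + 2 + s)} (hi : i.val ≤ m) : f i = p.getVert i := if_pos hi
  have hf_leaf {i : Fin (m + 2 + s)} (hi : ¬ i.val ≤ m) : f i = y ⟨i - (m + 1), by omega⟩ :=
    if_neg hi
  have hf_adj (i j : Fin (m + 2 + s))
      (hij : (i.val + 1 = j.val ∧ j.val < m + 2) ∨ (i.val = m + 2 - 2 ∧ m + 2 ≤ j.val)) :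
      G.Adj (f i) (f j) := by
    by_cases hj : j.val ≤ m
    · have hi : i.val < m := by omega
      rw [hf_path hi.le, hf_path hj, show j.val = i.val + 1 by omega]
      exact p.adj_getVert_succ hi
    · have hi : i.val = m := by omega
      rw [hf_path hi.le, hf_leaf hj, hi, Walk.getVert_length]
      exact hxy _
  have hf_inj : Injective f := fun i j hij => by
    by_cases hi : i.val ≤ m <;> by_cases hj : j.val ≤ m
    · rw [hf_path hi, hf_path hj] at hij
      exact Fin.ext (hp.getVert_injOn hi hj hij)
    · rw [hf_path hi, hf_leaf hj] at hij
      exact absurd (hij ▸ p.getVert_mem_support _) (hyp _)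
    · rw [hf_leaf hi, hf_path hj] at hij
      exact absurd (hij.symm ▸ p.getVert_mem_support _) (hyp _)
    · rw [hf_leaf hi, hf_leaf hj] at hij
      have := congrArg Fin.val (hy hij)
      exact Fin.ext (by simp only at this; omega)
  refine fun hG => hG ⟨⟨f, fun {i j} hij => ?_⟩, hf_inj⟩
  obtain ⟨-, hij | hji⟩ := (fromRel_adj _ _ _).1 hij
  exacts [hf_adj i j hij, (hf_adj j i hji).symm]

theorem BroomFree.card_lt_of_isPath {ℓ s : ℕ} {G : SimpleGraph V} (hG : BroomFree ℓ s G)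
    {a x : V} {p : G.Walk a x} (hp : p.IsPath) (hlen : p.length + 2 = ℓ) {N : Finset V}
    (hN : ∀ y ∈ N, G.Adj x y) : #N < ℓ + s := by
  by_contra! hcard
  have hsupp : #p.support.toFinset + Fintype.card (Fin (s + 1)) ≤ #N := by
    have := List.toFinset_card_le p.support
    rw [Walk.length_support] at this
    rw [Fintype.card_fin]
    omega
  obtain ⟨y, hy, hyN⟩ :=
    exists_injective_forall_mem_sdiff (fun _ => N) p.support.toFinset fun _ => hsupp
  simp only [mem_sdiff, List.mem_toFinset] at hyN
  exact not_broomFree_of_isPath hp y hy (fun i => hN _ (hyN i).1) (fun i => (hyN i).2)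
    (hlen ▸ hG)

end

/-- If `G` is `B(ℓ,s)`-free with `k = ⌊(ℓ-2)/2⌋` and `2k+2 ≤ ℓ+s`, and every
hyperedge of the `r`-uniform hypergraph `H` on `V(G)` is an `r`-set of vertices with
more than `ℓ+s` common neighbors in `G`, then `H` has no Berge path with `k+1`
hyperedges. -/
theorem no_berge_path_of_broomFree {V : Type*} [Fintype V] (ℓ s k r : ℕ) (hℓ : 4 ≤ ℓ)
    (hk : k = (ℓ - 2) / 2) (hks : 2 * k + 2 ≤ ℓ + s)
    (G : SimpleGraph V) (hG : BroomFree ℓ s G) (H : Finset (Finset V))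
    (hH : ∀ e ∈ H, e.card = r ∧
      ℓ + s < (Finset.univ.filter (fun u => ∀ x ∈ e, G.Adj x u)).card) :
    ¬ HasBergePath H (k + 1) := by
  rintro ⟨h, v, -, hv, hhH, hvh⟩
  set N : Fin (k + 1) → Finset V := fun i => {y | ∀ x ∈ h i, G.Adj x y}
  have hN i : ℓ + s < #(N i) := (hH _ (hhH i)).2
  obtain ⟨u, hu, huN⟩ := exists_injective_forall_mem_sdiff N (univ.image v) fun i => by
    have := card_image_le (s := univ) (f := v)
    simp only [card_univ, Fintype.card_fin] at this ⊢
    linarith [hN i]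
  simp only [N, mem_sdiff, mem_filter, mem_univ, true_and, mem_image, not_exists] at huN
  obtain ⟨_, p, hp, hlen, -⟩ := exists_isPath_alternating G v u hv hu
    (fun i j => Ne.symm ((huN i).2 j))
    fun i => ⟨(huN i).1 _ (hvh i).1, ((huN i).1 _ (hvh i).2).symm⟩
  have := hG.card_lt_of_isPath (hp.drop (2 * k + 4 - ℓ)) (by rw [Walk.drop_length]; omega)
    (N := N (Fin.last k)) fun y hy => by
      simp only [N, mem_filter] at hy
      exact hy.2 _ (hvh (Fin.last k)).2
  exact (hN _).not_gt this
end

section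
/- For every r ≥ 2 and t ≥ 1 there exists a constant c = c(r,t) such that every r-uniform hypergraph on n vertices containing no Berge path with t hyperedges has at most c·n hyperedges. -/
open scoped Classical
open Finset SimpleGraph

lemma bergePath_mono {V : Type*} {H H' : Finset (Finset V)} (hsub : H' ⊆ H) {t : ℕ}
    (hp : HasBergePath H' t) : HasBergePath H t := by
  obtain ⟨h, v, h1, h2, h3, h4⟩ := hp
  exact ⟨h, v, h1, h2, fun i => hsub (h3 i), h4⟩

lemma snoc_injective {n : ℕ} {α : Type*} {f : Fin n → α} {a : α}
    (hf : Function.Injective f) (ha : ∀ i, f i ≠ a) :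
    Function.Injective (Fin.snoc f a) := by
  intro i j hij
  induction i using Fin.lastCases with
  | last =>
    induction j using Fin.lastCases with
    | last => rfl
    | cast j =>
      rw [Fin.snoc_last, Fin.snoc_castSucc] at hij
      exact absurd hij.symm (ha j)
  | cast i =>
    induction j using Fin.lastCases with
    | last =>
      rw [Fin.snoc_last, Fin.snoc_castSucc] at hij
      exact absurd hij (ha i)
    | cast j =>
      rw [Fin.snoc_castSucc, Fin.snoc_castSucc] at hij
      exact congrArg Fin.castSucc (hf hij)

lemma one_path {V : Type*} {H : Finset (Finset V)} {e : Finset V}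
    (he : e ∈ H) (hcard : 2 ≤ e.card) : HasBergePath H 1 := by
  obtain ⟨a, ha, b, hb, hab⟩ := Finset.one_lt_card.mp hcard
  refine ⟨fun _ => e, fun i => if i = 0 then a else b, ?_, ?_, fun _ => he, ?_⟩
  · intro i j _; exact Subsingleton.elim i j
  · intro i j hij
    fin_cases i <;> fin_cases j <;> simp_all
  · intro i
    fin_cases i
    simp [ha, hb, Fin.ext_iff]

lemma extend_path {V : Type*} {H : Finset (Finset V)} {k : ℕ}
    {h : Fin k → Finset V} {v : Fin (k + 1) → V}
    (hinj : Function.Injective h) (vinj : Function.Injective v)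
    (hmem : ∀ i, h i ∈ H) (hcond : ∀ i : Fin k, v i.castSucc ∈ h i ∧ v i.succ ∈ h i)
    {e : Finset V} (he : e ∈ H) (hne : ∀ i, h i ≠ e)
    (hu : v (Fin.last k) ∈ e) {w : V} (hw : w ∈ e) (hwv : ∀ i, v i ≠ w) :
    HasBergePath H (k + 1) := by
  refine ⟨Fin.snoc h e, Fin.snoc v w, snoc_injective hinj hne,
    snoc_injective vinj hwv, ?_, ?_⟩
  · intro i
    induction i using Fin.lastCases with
    | last => simpa using he
    | cast i => simpa using hmem i
  · intro i
    induction i using Fin.lastCases with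
    | last =>
      rw [Fin.snoc_last, Fin.succ_last, Fin.snoc_last]
      rw [show (Fin.last k).castSucc = ((Fin.last k) : Fin (k+1)).castSucc from rfl,
        Fin.snoc_castSucc]
      exact ⟨hu, hw⟩
    | cast i =>
      rw [Fin.snoc_castSucc, Fin.succ_castSucc, Fin.snoc_castSucc, Fin.snoc_castSucc]
      exact hcond i

lemma key_bound (r t : ℕ) (hr : 2 ≤ r) (ht : 1 ≤ t) {V : Type*} [DecidableEq V] :
    ∀ (N : ℕ) (S : Finset V), S.card ≤ N → ∀ H : Finset (Finset V),
      (∀ e ∈ H, e.card = r) → (∀ e ∈ H, e ⊆ S) → ¬ HasBergePath H t →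
      H.card ≤ (t + 2 ^ t) * S.card := by
  intro N
  induction N with
  | zero =>
    intro S hS H hcard hsub _
    have hS0 : S = ∅ := Finset.card_eq_zero.mp (Nat.le_zero.mp hS)
    have : H = ∅ := by
      rw [Finset.eq_empty_iff_forall_notMem]
      intro e heH
      have h1 := hcard e heH
      have h2 := hsub e heH
      rw [hS0, Finset.subset_empty] at h2
      rw [h2] at h1
      simp at h1
      omega
    simp [this]
  | succ N ih =>
    intro S hS H hcard hsub hps
    set D := t + 2 ^ t with hD
    by_cases hlow : ∃ v ∈ S, (H.filter (fun e => v ∈ e)).card < D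
    · obtain ⟨v, hvS, hvdeg⟩ := hlow
      set H' := H.filter (fun e => v ∉ e) with hH'
      have hsub' : H' ⊆ H := Finset.filter_subset _ _
      have hbound : H'.card ≤ D * (S.erase v).card := by
        apply ih (S.erase v)
        · have : (S.erase v).card = S.card - 1 := Finset.card_erase_of_mem hvS
          omega
        · exact fun e he => hcard e (hsub' he)
        · intro e he
          rw [hH', Finset.mem_filter] at he
          exact Finset.subset_erase.mpr ⟨hsub e he.1, he.2⟩
        · exact fun hp => hps (bergePath_mono hsub' hp)
      have hsplit : (H.filter (fun e => v ∈ e)).card + H'.card = H.card :=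
        Finset.card_filter_add_card_filter_not _
      have hSc : 1 ≤ S.card := Finset.card_pos.mpr ⟨v, hvS⟩
      have herase : (S.erase v).card = S.card - 1 := Finset.card_erase_of_mem hvS
      rw [herase] at hbound
      have : D * S.card = D * (S.card - 1) + D := by
        have : S.card - 1 + 1 = S.card := by omega
        calc D * S.card = D * (S.card - 1 + 1) := by rw [this]
        _ = D * (S.card - 1) + D := by ring
      omega
    · push_neg at hlow
      by_cases hH : H = ∅
      · simp [hH]
      · exfalso
        obtain ⟨e₀, he₀⟩ := Finset.nonempty_iff_ne_empty.mpr hH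
        have hp1 : HasBergePath H 1 := one_path he₀ (by rw [hcard e₀ he₀]; exact hr)
        rcases Nat.lt_or_ge t 2 with ht1 | ht2
        · have ht1 : t = 1 := by omega
          exact hps (by rw [ht1]; exact hp1)
        have ht1' : 1 ≤ t - 1 := by omega
        obtain ⟨k, hk1, hkt, hPk, hmax⟩ :
            ∃ k, 1 ≤ k ∧ k ≤ t - 1 ∧ HasBergePath H k ∧
              ∀ m, k < m → m ≤ t - 1 → ¬ HasBergePath H m :=
          ⟨Nat.findGreatest (HasBergePath H) (t - 1),
            Nat.le_findGreatest ht1' hp1, Nat.findGreatest_le (t - 1),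
            Nat.findGreatest_spec ht1' hp1,
            fun m hm hm' => Nat.findGreatest_is_greatest hm hm'⟩
        obtain ⟨h, v, hinj, vinj, hmem, hcond⟩ := hPk
        set u := v (Fin.last k) with hu
        -- u is in some edge, hence in S
        have huS : u ∈ S := by
          have hkpos : 0 < k := hk1
          set i : Fin k := ⟨k - 1, by omega⟩ with hi
          have hisucc : i.succ = Fin.last k := by
            rw [Fin.ext_iff]; simp [hi, Fin.last]; omega
          have := (hcond i).2
          rw [hisucc] at this
          exact hsub _ (hmem i) this
        have hdeg : D ≤ (H.filter (fun e => u ∈ e)).card := hlow u huS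
        -- every edge containing u is a path edge or inside the path vertices
        have hcover : H.filter (fun e => u ∈ e) ⊆
            (Finset.image h Finset.univ) ∪ (Finset.image v Finset.univ).powerset := by
          intro e he
          rw [Finset.mem_filter] at he
          obtain ⟨heH, hue⟩ := he
          rw [Finset.mem_union]
          by_contra hcon
          push_neg at hcon
          obtain ⟨h1, h2⟩ := hcon
          rw [Finset.mem_powerset] at h2
          obtain ⟨w, hwe, hwv⟩ := Finset.not_subset.mp h2
          have hne : ∀ i, h i ≠ e := by
            intro i hie
            exact h1 (Finset.mem_image.mpr ⟨i, Finset.mem_univ i, hie⟩)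
          have hwv' : ∀ i, v i ≠ w := by
            intro i hiw
            exact hwv (Finset.mem_image.mpr ⟨i, Finset.mem_univ i, hiw⟩)
          have hext : HasBergePath H (k + 1) :=
            extend_path hinj vinj hmem hcond heH hne hue hwe hwv'
          rcases Nat.lt_or_ge (k + 1) t with hlt | hge
          · exact hmax (k + 1) (by omega) (by omega) hext
          · have hkt' : k + 1 = t := by omega
            exact hps (by rw [← hkt']; exact hext)
        have hc1 : (Finset.image h Finset.univ).card ≤ k := by
          calc (Finset.image h Finset.univ).card ≤ (Finset.univ : Finset (Fin k)).card :=
            Finset.card_image_le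
          _ = k := by simp
        have hc2 : (Finset.image v Finset.univ).card ≤ k + 1 := by
          calc (Finset.image v Finset.univ).card ≤ (Finset.univ : Finset (Fin (k+1))).card :=
            Finset.card_image_le
          _ = k + 1 := by simp
        have hc3 : ((Finset.image v Finset.univ).powerset).card ≤ 2 ^ t := by
          rw [Finset.card_powerset]
          exact Nat.pow_le_pow_right (by norm_num) (by omega)
        have := Finset.card_le_card hcover
        have hun := Finset.card_union_le (Finset.image h Finset.univ)
          ((Finset.image v Finset.univ).powerset)
        omega

/-- For every `r ≥ 2` and `t ≥ 1` there is a constant `c` such that every `r`-uniform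
hypergraph on `n` vertices with no Berge path with `t` hyperedges has at most `c·n`
hyperedges. -/
theorem berge_path_free_edge_bound (r t : ℕ) (hr : 2 ≤ r) (ht : 1 ≤ t) :
    ∃ c : ℕ, ∀ n : ℕ, ∀ H : Finset (Finset (Fin n)),
      (∀ e ∈ H, e.card = r) → ¬ HasBergePath H t → H.card ≤ c * n := by
  refine ⟨t + 2 ^ t, fun n H hcard hps => ?_⟩
  have := key_bound r t hr ht n (Finset.univ : Finset (Fin n)) (by simp) H hcard
    (fun e _ => Finset.subset_univ e) hps
  simpa using this
end

section
/- Let k ≥ 1 and suppose G is a graph containing H(k,m) as a spanning subgraph on vertex set B ∪ W (|B| = k, W the independent side, m ≥ 2k+3), such that G has no path on 2k+2 vertices with a penultimate vertex of degree at least 2k+2. Then G has no edge with both endpoints outside B. -/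
open scoped Classical
open Finset SimpleGraph

/-- Interleave two lists. -/
private def interl {V : Type*} : List V → List V → List V
  | b :: bs, w :: ws => b :: w :: interl bs ws
  | _, _ => []

private lemma interl_length {V : Type*} : ∀ (bs ws : List V), bs.length = ws.length →
    (interl bs ws).length = 2 * bs.length
  | [], [], _ => rfl
  | b :: bs, w :: ws, h => by
      simp only [interl, List.length_cons]
      rw [interl_length bs ws (by simpa using h)]
      ring
  | [], w :: ws, h => by simp at h
  | b :: bs, [], h => by simp at h

private lemma mem_interl {V : Type*} : ∀ (bs ws : List V) (z : V),
    z ∈ interl bs ws → z ∈ bs ∨ z ∈ ws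
  | [], _, z, h => by cases (by simpa [interl] using h : False)
  | b :: bs, [], z, h => by cases (by simpa [interl] using h : False)
  | b :: bs, w :: ws, z, h => by
      simp only [interl, List.mem_cons] at h
      rcases h with h | h | h
      · exact Or.inl (by simp [h])
      · exact Or.inr (by simp [h])
      · rcases mem_interl bs ws z h with h' | h'
        · exact Or.inl (by simp [h'])
        · exact Or.inr (by simp [h'])

private lemma nodup_interl {V : Type*} (B : Finset V) : ∀ (bs ws : List V),
    (∀ b ∈ bs, b ∈ B) → (∀ w ∈ ws, w ∉ B) → bs.Nodup → ws.Nodup →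
    (interl bs ws).Nodup
  | [], ws, _, _, _, _ => by
      cases ws <;> simp [interl]
  | b :: bs, [], _, _, _, _ => by simp [interl]
  | b :: bs, w :: ws, hb, hw, hnb, hnw => by
      simp only [interl, List.nodup_cons]
      refine ⟨?_, ?_, nodup_interl B bs ws (fun x hx => hb x (by simp [hx]))
        (fun x hx => hw x (by simp [hx])) (List.nodup_cons.mp hnb).2
        (List.nodup_cons.mp hnw).2⟩
      · simp only [List.mem_cons, not_or]
        refine ⟨fun h => hw w (by simp) (h ▸ hb b (by simp)), fun h => ?_⟩
        rcases mem_interl bs ws b h with h' | h'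
        · exact (List.nodup_cons.mp hnb).1 h'
        · exact hw b (by simp [h']) (hb b (by simp))
      · intro h
        rcases mem_interl bs ws w h with h' | h'
        · exact hw w (by simp) (hb w (by simp [h']))
        · exact (List.nodup_cons.mp hnw).1 h'

private lemma interl_getElem_even {V : Type*} : ∀ (bs ws : List V), bs.length = ws.length →
    ∀ i (h : 2 * i < (interl bs ws).length), (interl bs ws)[2 * i] ∈ bs
  | [], [], _, i, h => by simp [interl] at h
  | [], w :: ws, hl, i, h => by simp at hl
  | b :: bs, [], hl, i, h => by simp at hl
  | b :: bs, w :: ws, hl, i, h => by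
      cases i with
      | zero => simp [interl]
      | succ j =>
          have h2 : 2 * (j + 1) = (2 * j) + 1 + 1 := by ring
          simp only [interl] at h ⊢
          simp only [h2] at h ⊢
          simp only [List.getElem_cons_succ]
          exact List.mem_cons_of_mem _
            (interl_getElem_even bs ws (by simpa using hl) j (by
              simp only [List.length_cons] at h; omega))

private lemma build_walk {V : Type*} (G : SimpleGraph V) (B : Finset V)
    (hspan : ∀ u v : V, u ≠ v → u ∈ B → G.Adj u v) :
    ∀ (bs ws : List V), bs.length = ws.length →
    (∀ b ∈ bs, b ∈ B) → (∀ w ∈ ws, w ∉ B) →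
    ∀ x, x ∉ B → ∃ (y : V) (p : G.Walk x y), p.support = x :: interl bs ws
  | [], [], _, _, _, x, hx => ⟨x, SimpleGraph.Walk.nil, by simp [interl]⟩
  | [], w :: ws, hl, _, _, x, hx => by simp at hl
  | b :: bs, [], hl, _, _, x, hx => by simp at hl
  | b :: bs, w :: ws, hl, hb, hw, x, hx => by
      have hbB : b ∈ B := hb b (by simp)
      have hwB : w ∉ B := hw w (by simp)
      have h1 : G.Adj x b := (hspan b x (fun h => hx (h ▸ hbB)) hbB).symm
      have h2 : G.Adj b w := hspan b w (fun h => hwB (h ▸ hbB)) hbB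
      obtain ⟨y, q, hq⟩ := build_walk G B hspan bs ws (by simpa using hl)
        (fun z hz => hb z (by simp [hz])) (fun z hz => hw z (by simp [hz])) w hwB
      exact ⟨y, SimpleGraph.Walk.cons h1 (SimpleGraph.Walk.cons h2 q),
        by simp [SimpleGraph.Walk.support_cons, hq, interl]⟩

private lemma getVert_eq_support_getElem {V : Type*} {G : SimpleGraph V} {a b : V}
    (p : G.Walk a b) : ∀ (i : ℕ) (h : i < p.support.length),
    p.getVert i = p.support[i] := by
  induction p with
  | nil =>
      intro i h
      simp only [SimpleGraph.Walk.support_nil, List.length_singleton] at h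
      interval_cases i <;> simp
  | cons hadj q ih =>
      intro i h
      cases i with
      | zero => simp
      | succ j =>
          simp only [SimpleGraph.Walk.support_cons, List.length_cons] at h
          simp only [SimpleGraph.Walk.support_cons, List.getElem_cons_succ,
            SimpleGraph.Walk.getVert_cons _ _ (Nat.succ_ne_zero j)]
          exact ih j (by omega)

/-- Suppose `G` on `m ≥ 2k+3` vertices contains `H(k,m)` as a spanning subgraph with
part `B` of size `k ≥ 1` (every vertex of `B` is adjacent to all other vertices), and
`G` has no path on `2k+2` vertices whose penultimate vertex has degree at least
`2k+2`. Then no edge of `G` has both endpoints outside `B`. -/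
theorem no_edge_outside_B {V : Type*} [Fintype V] (k m : ℕ) (hk : 1 ≤ k)
    (hm : Fintype.card V = m) (hmk : 2 * k + 3 ≤ m)
    (G : SimpleGraph V) (B : Finset V) (hB : B.card = k)
    (hspan : ∀ u v : V, u ≠ v → u ∈ B → G.Adj u v)
    (hnopath : ¬ ∃ (u v : V) (p : G.Walk u v), p.IsPath ∧ p.length = 2 * k + 1 ∧
      (2 * k + 2 ≤ G.degree (p.getVert 1) ∨ 2 * k + 2 ≤ G.degree (p.getVert (2 * k)))) :
    ∀ u v : V, G.Adj u v → u ∈ B ∨ v ∈ B := by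
  intro u v huv
  by_contra hcon
  push_neg at hcon
  obtain ⟨huB, hvB⟩ := hcon
  -- choose k white vertices avoiding u, v, B
  have hT : (insert u (insert v B)).card ≤ k + 2 := by
    calc (insert u (insert v B)).card ≤ (insert v B).card + 1 := Finset.card_insert_le _ _
      _ ≤ B.card + 1 + 1 := by
          have := Finset.card_insert_le v B; omega
      _ = k + 2 := by omega
  have hcardS : k ≤ (Finset.univ \ insert u (insert v B)).card := by
    rw [Finset.card_sdiff_of_subset (Finset.subset_univ _), Finset.card_univ, hm]
    omega
  obtain ⟨S, hSsub, hScard⟩ := Finset.exists_subset_card_eq hcardS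
  set bs := B.toList with hbs
  set ws := S.toList with hws
  have hbslen : bs.length = k := by simp [hbs, hB]
  have hwslen : ws.length = k := by simp [hws, hScard]
  have hbsmem : ∀ b ∈ bs, b ∈ B := fun b hb => by simpa [hbs] using hb
  have hSprop : ∀ w ∈ S, w ∉ B ∧ w ≠ u ∧ w ≠ v := by
    intro w hw
    have := hSsub hw
    simp only [Finset.mem_sdiff, Finset.mem_insert] at this
    exact ⟨fun h => this.2 (Or.inr (Or.inr h)), fun h => this.2 (Or.inl h),
      fun h => this.2 (Or.inr (Or.inl h))⟩
  have hwsmem : ∀ w ∈ ws, w ∉ B := fun w hw => (hSprop w (by simpa [hws] using hw)).1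
  obtain ⟨y, q, hq⟩ := build_walk G B hspan bs ws (by omega) hbsmem hwsmem v hvB
  set p := SimpleGraph.Walk.cons huv q with hp
  have hsupp : p.support = u :: v :: interl bs ws := by
    simp [hp, SimpleGraph.Walk.support_cons, hq]
  have hilen : (interl bs ws).length = 2 * k := by
    rw [interl_length bs ws (by omega), hbslen]
  have hslen : p.support.length = 2 * k + 2 := by
    rw [hsupp]; simp [hilen]
  have hplen : p.length = 2 * k + 1 := by
    have := SimpleGraph.Walk.length_support p
    omega
  -- path
  have hpath : p.IsPath := by
    rw [SimpleGraph.Walk.isPath_def, hsupp]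
    refine List.nodup_cons.mpr ⟨?_, List.nodup_cons.mpr ⟨?_, ?_⟩⟩
    · simp only [List.mem_cons, not_or]
      refine ⟨G.ne_of_adj huv, fun h => ?_⟩
      rcases mem_interl bs ws u h with h' | h'
      · exact huB (hbsmem u h')
      · exact (hSprop u (by simpa [hws] using h')).2.1 rfl
    · intro h
      rcases mem_interl bs ws v h with h' | h'
      · exact hvB (hbsmem v h')
      · exact (hSprop v (by simpa [hws] using h')).2.2 rfl
    · exact nodup_interl B bs ws hbsmem hwsmem (Finset.nodup_toList B) (Finset.nodup_toList S)
  -- the vertex at position 2k is in B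
  have h2k : 2 * k < p.support.length := by omega
  have hgv : p.getVert (2 * k) ∈ B := by
    rw [getVert_eq_support_getElem p (2 * k) h2k]
    have hkk : 2 * k = (2 * (k - 1)) + 1 + 1 := by omega
    simp only [hsupp, hkk, List.getElem_cons_succ]
    exact hbsmem _ (interl_getElem_even bs ws (by omega) (k - 1) (by omega))
  -- degree bound
  have hdeg : 2 * k + 2 ≤ G.degree (p.getVert (2 * k)) := by
    set b := p.getVert (2 * k)
    have hsub : Finset.univ.erase b ⊆ G.neighborFinset b := by
      intro z hz
      rw [SimpleGraph.mem_neighborFinset]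
      exact hspan b z (fun h => (Finset.mem_erase.mp hz).1 h.symm) hgv
    have := Finset.card_le_card hsub
    rw [SimpleGraph.card_neighborFinset_eq_degree] at this
    have : m - 1 ≤ G.degree b := by
      rwa [Finset.card_erase_of_mem (Finset.mem_univ b), Finset.card_univ, hm] at this
    omega
  exact hnopath ⟨u, y, p, hpath, hplen, Or.inr hdeg⟩
end
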